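/- arXiv:2405.15890 — 2 statements merged into one kernel-verified Lean document; each statement's English description precedes it below -/
import Mathlib

section
/- Let a ∈ ℝ⁴, V(p) = a − ⟨a,p⟩p, and let γ be a unit-speed conformal trajectory on S³ of V with constant q ≠ 0 that is not a geodesic, with ⟨γ(s), a⟩ = a₁ cos s + a₂ sin s. Then the curvature of γ is the constant κ = |q|·√(|a|² − a₁² − a₂²). -/
/-!
The field `X` along the trajectory is the tangent vector representing `w ↦ det(V, γ', w, γ)`,
i.e. the cross product of `V, γ', γ` in `ℝ⁴`. For orthonormal `γ, γ'` and
`V = a - ⟨a,γ⟩γ ⟂ γ`, the Gram identity gives `|X|² = |V|² - ⟨V,γ'⟩² = |a|² - ⟨a,γ⟩² - ⟨a,γ'⟩²`.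
Differentiating `⟨γ, a⟩ = a₁ cos s + a₂ sin s` gives `⟨γ', a⟩ = -a₁ sin s + a₂ cos s`, so
`⟨a,γ⟩² + ⟨a,γ'⟩² = a₁² + a₂²`, and `κ = |γ'' + γ| = |q| |X|`.
-/

def dot4 (u v : Fin 4 → ℝ) : ℝ := ∑ i, u i * v i

def det4 (u v w p : Fin 4 → ℝ) : ℝ := (Matrix.of ![u, v, w, p]).det

lemma dot4_eq_dotProduct (u v : Fin 4 → ℝ) : dot4 u v = u ⬝ᵥ v := rfl

lemma HasDerivAt.dotProduct {ι : Type*} [Fintype ι] {u v : ℝ → ι → ℝ} {u' v' : ι → ℝ} {s : ℝ}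
    (hu : HasDerivAt u u' s) (hv : HasDerivAt v v' s) :
    HasDerivAt (fun t => u t ⬝ᵥ v t) (u' ⬝ᵥ v s + u s ⬝ᵥ v') s := by
  have := HasDerivAt.fun_sum (u := Finset.univ) fun i _ =>
    (hasDerivAt_pi.mp hu i).fun_mul (hasDerivAt_pi.mp hv i)
  simpa only [_root_.dotProduct, Finset.sum_add_distrib] using this

/-- Cofactors of the `w`-row of `det4 u v w p`, a cross product of three vectors in `ℝ⁴`. -/
def cross4 (u v p : Fin 4 → ℝ) (j : Fin 4) : ℝ :=
  (-1) ^ (2 + j : ℕ) * (Matrix.of ![u ∘ j.succAbove, v ∘ j.succAbove, p ∘ j.succAbove]).det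

lemma cross4_dotProduct (u v p w : Fin 4 → ℝ) : cross4 u v p ⬝ᵥ w = det4 u v w p := by
  rw [det4, Matrix.det_succ_row _ 2, dotProduct]
  refine Finset.sum_congr rfl fun j _ => ?_
  have hminor : (Matrix.of ![u, v, w, p]).submatrix (Fin.succAbove 2) j.succAbove
      = Matrix.of ![u ∘ j.succAbove, v ∘ j.succAbove, p ∘ j.succAbove] := by
    ext k l; fin_cases k <;> rfl
  rw [cross4, hminor]
  simp only [Matrix.of_apply, Matrix.cons_val, Fin.coe_ofNat_eq_mod]
  ring

lemma cross4_dotProduct_self_right (u v p : Fin 4 → ℝ) : cross4 u v p ⬝ᵥ p = 0 := by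
  rw [cross4_dotProduct, det4]
  exact Matrix.det_zero_of_row_eq (i := 2) (j := 3) (by decide) rfl

lemma cross4_dotProduct_cross4 (u v p : Fin 4 → ℝ) :
    cross4 u v p ⬝ᵥ cross4 u v p
    = u ⬝ᵥ u * (v ⬝ᵥ v * p ⬝ᵥ p - (v ⬝ᵥ p) ^ 2)
      - u ⬝ᵥ v * (u ⬝ᵥ v * p ⬝ᵥ p - v ⬝ᵥ p * u ⬝ᵥ p)
      + u ⬝ᵥ p * (u ⬝ᵥ v * v ⬝ᵥ p - v ⬝ᵥ v * u ⬝ᵥ p) := by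
  simp only [dotProduct, Fin.sum_univ_four, cross4, Matrix.det_fin_three, Matrix.of_apply,
    Matrix.cons_val, Function.comp_apply, Fin.succAbove, Fin.reduceCastSucc, Fin.reduceSucc,
    Fin.reduceLT, Fin.isValue, Fin.coe_ofNat_eq_mod, Nat.reduceMod, ↓reduceIte]
  ring

lemma eq_cross4_of_forall_dotProduct {X u v p : Fin 4 → ℝ} (hXp : X ⬝ᵥ p = 0)
    (hX : ∀ w, w ⬝ᵥ p = 0 → X ⬝ᵥ w = det4 u v w p) : X = cross4 u v p := by
  have hdp : (X - cross4 u v p) ⬝ᵥ p = 0 := by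
    rw [sub_dotProduct, hXp, cross4_dotProduct_self_right, sub_zero]
  have hdd : (X - cross4 u v p) ⬝ᵥ (X - cross4 u v p) = 0 := by
    rw [sub_dotProduct, hX _ hdp, cross4_dotProduct, sub_self]
  exact sub_eq_zero.mp (dotProduct_self_eq_zero.mp hdd)

lemma cross4_sub_smul_dotProduct_self (a v p : Fin 4 → ℝ) (hp : p ⬝ᵥ p = 1)
    (hv : v ⬝ᵥ v = 1) (hvp : v ⬝ᵥ p = 0) :
    cross4 (a - (a ⬝ᵥ p) • p) v p ⬝ᵥ cross4 (a - (a ⬝ᵥ p) • p) v p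
      = a ⬝ᵥ a - (a ⬝ᵥ p) ^ 2 - (a ⬝ᵥ v) ^ 2 := by
  simp only [cross4_dotProduct_cross4, sub_dotProduct, dotProduct_sub, smul_dotProduct,
    dotProduct_smul, smul_eq_mul, dotProduct_comm p a, dotProduct_comm p v,
    hp, hv, hvp]
  ring

theorem stmt10_general (I : Set ℝ) (hI : IsOpen I)
    (a : Fin 4 → ℝ) (q a₁ a₂ : ℝ)
    (γ g g' X : ℝ → (Fin 4 → ℝ))
    (hd1 : ∀ s ∈ I, HasDerivAt γ (g s) s)
    (hsph : ∀ s ∈ I, dot4 (γ s) (γ s) = 1)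
    (hunit : ∀ s ∈ I, dot4 (g s) (g s) = 1)
    (hXt : ∀ s ∈ I, dot4 (X s) (γ s) = 0)
    (hX : ∀ s ∈ I, ∀ w, dot4 w (γ s) = 0 →
      dot4 (X s) w = det4 (a - dot4 a (γ s) • γ s) (g s) w (γ s))
    (heq : ∀ s ∈ I, g' s + γ s = q • X s)
    (hf : ∀ s ∈ I, dot4 (γ s) a = a₁ * Real.cos s + a₂ * Real.sin s) :
    ∀ s ∈ I, Real.sqrt (dot4 (g' s + γ s) (g' s + γ s))
      = |q| * Real.sqrt (dot4 a a - a₁ ^ 2 - a₂ ^ 2) := by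
  simp only [dot4_eq_dotProduct] at *
  intro s hs
  have hnhds : ∀ᶠ t in nhds s, t ∈ I := hI.mem_nhds hs
  have hgγ : g s ⬝ᵥ γ s = 0 := by
    have h := ((hasDerivAt_const s (1 : ℝ)).congr_of_eventuallyEq
      (hnhds.mono hsph)).unique ((hd1 s hs).dotProduct (hd1 s hs))
    rw [dotProduct_comm (γ s)] at h
    linarith
  have hga : g s ⬝ᵥ a = -(a₁ * Real.sin s) + a₂ * Real.cos s := by
    have htrig := ((Real.hasDerivAt_cos s).const_mul a₁).add ((Real.hasDerivAt_sin s).const_mul a₂)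
    have h := (htrig.congr_of_eventuallyEq (hnhds.mono hf)).unique
      ((hd1 s hs).dotProduct (hasDerivAt_const s a))
    rw [dotProduct_zero, add_zero] at h
    linarith
  have hXX : X s ⬝ᵥ X s = a ⬝ᵥ a - a₁ ^ 2 - a₂ ^ 2 := by
    rw [eq_cross4_of_forall_dotProduct (hXt s hs) (hX s hs),
      cross4_sub_smul_dotProduct_self a _ _ (hsph s hs) (hunit s hs) hgγ,
      dotProduct_comm a (γ s), dotProduct_comm a (g s), hf s hs, hga]
    linear_combination -(a₁ ^ 2 + a₂ ^ 2) * Real.sin_sq_add_cos_sq s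
  rw [heq s hs, smul_dotProduct, dotProduct_smul, hXX, smul_eq_mul, smul_eq_mul, ← mul_assoc,
    ← sq, Real.sqrt_mul (sq_nonneg q), Real.sqrt_sq_eq_abs]

/-- A non-geodesic unit-speed conformal trajectory on `S³` of
`V(p) = a - ⟨a,p⟩p` with `⟨γ, a⟩ = a₁ cos s + a₂ sin s` has constant curvature
`κ = |q| √(|a|² - a₁² - a₂²)`. -/
theorem stmt10 (I : Set ℝ) (hI : IsOpen I) (hconv : Convex ℝ I)
    (a : Fin 4 → ℝ) (q a₁ a₂ : ℝ) (hq : q ≠ 0)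
    (γ g g' X : ℝ → (Fin 4 → ℝ))
    (hd1 : ∀ s ∈ I, HasDerivAt γ (g s) s)
    (hd2 : ∀ s ∈ I, HasDerivAt g (g' s) s)
    (hsph : ∀ s ∈ I, dot4 (γ s) (γ s) = 1)
    (hunit : ∀ s ∈ I, dot4 (g s) (g s) = 1)
    (hXt : ∀ s ∈ I, dot4 (X s) (γ s) = 0)
    (hX : ∀ s ∈ I, ∀ w, dot4 w (γ s) = 0 →
      dot4 (X s) w = det4 (a - dot4 a (γ s) • γ s) (g s) w (γ s))
    (heq : ∀ s ∈ I, g' s + γ s = q • X s)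
    (hgeo : ∃ s ∈ I, g' s + γ s ≠ 0)
    (hf : ∀ s ∈ I, dot4 (γ s) a = a₁ * Real.cos s + a₂ * Real.sin s) :
    ∀ s ∈ I, Real.sqrt (dot4 (g' s + γ s) (g' s + γ s))
      = |q| * Real.sqrt (dot4 a a - a₁ ^ 2 - a₂ ^ 2) :=
  stmt10_general I hI a q a₁ a₂ γ g g' X hd1 hsph hunit hXt hX heq hf
end

section
/- Let a ∈ ℝ⁴₁, V(p) = a + ⟨a,p⟩p, and let γ be a unit-speed non-geodesic conformal trajectory of V on H³ with constant q ≠ 0 and ⟨γ(s), a⟩ = a₁ cosh s + a₂ sinh s. Then γ has constant curvature κ = |q|·√(|⟨a,a⟩ + a₁² − a₂²|). -/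
/-!
Differentiating `⟨γ, γ⟩ = -1` and `⟨γ, a⟩ = a₁ cosh s + a₂ sinh s` gives `γ' ⊥ γ` and
`⟨γ', a⟩ = a₁ sinh s + a₂ cosh s`. The field `X` is the cross product `V × γ'` in the tangent
space `γ^⊥`, so `⟨X, X⟩ = ⟨V, V⟩⟨γ', γ'⟩ - ⟨V, γ'⟩² = ⟨a, a⟩ + ⟨a, γ⟩² - ⟨a, γ'⟩²`, which is the
constant `⟨a, a⟩ + a₁² - a₂²` because `cosh² - sinh² = 1`. It is nonnegative since `X` is
orthogonal to the timelike vector `γ`, and `κ² = q² ⟨X, X⟩`.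
-/

def ldot (u v : Fin 4 → ℝ) : ℝ := u 0 * v 0 + u 1 * v 1 + u 2 * v 2 - u 3 * v 3

theorem ldot_comm (u v : Fin 4 → ℝ) : ldot u v = ldot v u := by
  simp only [ldot]; ring

theorem ldot_add_left (u v w : Fin 4 → ℝ) : ldot (u + v) w = ldot u w + ldot v w := by
  simp only [ldot, Pi.add_apply]; ring

theorem ldot_add_right (u v w : Fin 4 → ℝ) : ldot u (v + w) = ldot u v + ldot u w := by
  rw [ldot_comm, ldot_add_left, ldot_comm v, ldot_comm w]

theorem ldot_smul_left (c : ℝ) (u v : Fin 4 → ℝ) : ldot (c • u) v = c * ldot u v := by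
  simp only [ldot, Pi.smul_apply, smul_eq_mul]; ring

theorem ldot_smul_right (c : ℝ) (u v : Fin 4 → ℝ) : ldot u (c • v) = c * ldot u v := by
  rw [ldot_comm, ldot_smul_left, ldot_comm]

theorem ldot_single (u : Fin 4 → ℝ) :
    ldot u ![1, 0, 0, 0] = u 0 ∧ ldot u ![0, 1, 0, 0] = u 1 ∧
      ldot u ![0, 0, 1, 0] = u 2 ∧ ldot u ![0, 0, 0, 1] = -u 3 := by
  simp [ldot]

theorem ldot_self_nonneg_of_ldot_eq_zero {x p : Fin 4 → ℝ} (hp : ldot p p < 0)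
    (hxp : ldot x p = 0) : 0 ≤ ldot x x := by
  simp only [ldot] at *
  set S := x 0 ^ 2 + x 1 ^ 2 + x 2 ^ 2
  set P := p 0 ^ 2 + p 1 ^ 2 + p 2 ^ 2
  have hP : P < p 3 ^ 2 := by linarith
  have hcs : (x 0 * p 0 + x 1 * p 1 + x 2 * p 2) ^ 2 ≤ S * P := by
    nlinarith [sq_nonneg (x 0 * p 1 - x 1 * p 0), sq_nonneg (x 0 * p 2 - x 2 * p 0),
      sq_nonneg (x 1 * p 2 - x 2 * p 1)]
  have hx3 : x 3 ^ 2 * p 3 ^ 2 ≤ S * p 3 ^ 2 :=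
    calc x 3 ^ 2 * p 3 ^ 2 = (x 0 * p 0 + x 1 * p 1 + x 2 * p 2) ^ 2 := by
          rw [← mul_pow]; congr 1; linarith
      _ ≤ S * P := hcs
      _ ≤ S * p 3 ^ 2 := by gcongr
  have := le_of_mul_le_mul_right hx3 ((by positivity : 0 ≤ P).trans_lt hP)
  linarith

theorem det4_eq (u v w p : Fin 4 → ℝ) :
    det4 u v w p =
      u 0 * (v 1 * (w 2 * p 3 - w 3 * p 2) - v 2 * (w 1 * p 3 - w 3 * p 1)
          + v 3 * (w 1 * p 2 - w 2 * p 1))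
      - u 1 * (v 0 * (w 2 * p 3 - w 3 * p 2) - v 2 * (w 0 * p 3 - w 3 * p 0)
          + v 3 * (w 0 * p 2 - w 2 * p 0))
      + u 2 * (v 0 * (w 1 * p 3 - w 3 * p 1) - v 1 * (w 0 * p 3 - w 3 * p 0)
          + v 3 * (w 0 * p 1 - w 1 * p 0))
      - u 3 * (v 0 * (w 1 * p 2 - w 2 * p 1) - v 1 * (w 0 * p 2 - w 2 * p 0)
          + v 2 * (w 0 * p 1 - w 1 * p 0)) := by
  simp [det4, Matrix.det_succ_row_zero, Fin.sum_univ_succ, Fin.succAbove]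
  ring

theorem det4_third_add_smul_fourth (u v w p : Fin 4 → ℝ) (c : ℝ) :
    det4 u v (w + c • p) p = det4 u v w p := by
  simp only [det4_eq, Pi.add_apply, Pi.smul_apply, smul_eq_mul]; ring

/-- `X` is the Lorentzian cross product of `u, v, p`; the right side is minus their Gram
determinant. -/
theorem ldot_self_of_forall_ldot_eq_det4 {X u v p : Fin 4 → ℝ}
    (hX : ∀ w, ldot X w = det4 u v w p) :
    ldot X X = -(ldot u u * (ldot v v * ldot p p - ldot v p ^ 2)
      - ldot u v * (ldot u v * ldot p p - ldot v p * ldot u p)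
      + ldot u p * (ldot u v * ldot v p - ldot v v * ldot u p)) := by
  obtain ⟨h0, h1, h2, h3⟩ := ldot_single X
  rw [hX] at h0 h1 h2 h3
  have hXX : ldot X X = X 0 ^ 2 + X 1 ^ 2 + X 2 ^ 2 - X 3 ^ 2 := by simp only [ldot]; ring
  rw [hXX, ← neg_sq (X 3), ← h0, ← h1, ← h2, ← h3]
  simp only [det4_eq, ldot, Matrix.cons_val, Matrix.cons_val_zero, Matrix.cons_val_one]
  ring

theorem forall_ldot_eq_det4_of_orthogonal {X u v p : Fin 4 → ℝ} (hp : ldot p p ≠ 0)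
    (hXp : ldot X p = 0) (hX : ∀ w, ldot w p = 0 → ldot X w = det4 u v w p) (w : Fin 4 → ℝ) :
    ldot X w = det4 u v w p := by
  have hwp : ldot (w + (-(ldot w p / ldot p p)) • p) p = 0 := by
    rw [ldot_add_left, ldot_smul_left]; field_simp; ring
  have := hX _ hwp
  rwa [ldot_add_right, ldot_smul_right, hXp, mul_zero, add_zero,
    det4_third_add_smul_fourth] at this

theorem ldot_self_of_conformal {a p v X : Fin 4 → ℝ} (hp : ldot p p = -1) (hv : ldot v v = 1)
    (hvp : ldot v p = 0) (hXp : ldot X p = 0)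
    (hX : ∀ w, ldot w p = 0 → ldot X w = det4 (a + ldot a p • p) v w p) :
    ldot X X = ldot a a + ldot a p ^ 2 - ldot a v ^ 2 := by
  have hVp : ldot (a + ldot a p • p) p = 0 := by
    rw [ldot_add_left, ldot_smul_left, hp]; ring
  have hVV : ldot (a + ldot a p • p) (a + ldot a p • p) = ldot a a + ldot a p ^ 2 := by
    rw [ldot_add_right, ldot_smul_right, hVp, ldot_add_left, ldot_smul_left, ldot_comm p a]; ring
  have hVv : ldot (a + ldot a p • p) v = ldot a v := by
    rw [ldot_add_left, ldot_smul_left, ldot_comm p v, hvp]; ring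
  have hp0 : ldot p p ≠ 0 := by rw [hp]; norm_num
  rw [ldot_self_of_forall_ldot_eq_det4 (forall_ldot_eq_det4_of_orthogonal hp0 hXp hX),
    hVV, hVv, hVp, hv, hvp, hp]
  ring

section Curves

variable {I : Set ℝ} {γ g : ℝ → Fin 4 → ℝ} {s : ℝ}

theorem HasDerivAt.ldot {f h : ℝ → Fin 4 → ℝ} {f' h' : Fin 4 → ℝ} (hf : HasDerivAt f f' s)
    (hh : HasDerivAt h h' s) :
    HasDerivAt (fun t => ldot (f t) (h t)) (ldot f' (h s) + ldot (f s) h') s := by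
  rw [hasDerivAt_pi] at hf hh
  exact ((((hf 0).mul (hh 0)).add ((hf 1).mul (hh 1))).add ((hf 2).mul (hh 2))).sub
    ((hf 3).mul (hh 3)) |>.congr_deriv (by simp only [_root_.ldot]; ring)

theorem ldot_deriv_self_eq_zero (hI : IsOpen I) (hγ : ∀ t ∈ I, HasDerivAt γ (g t) t) {c : ℝ}
    (hc : ∀ t ∈ I, ldot (γ t) (γ t) = c) (hs : s ∈ I) : ldot (g s) (γ s) = 0 := by
  have hconst : HasDerivAt (fun t => ldot (γ t) (γ t)) 0 s :=
    (hasDerivAt_const s c).congr_of_eventuallyEq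
      (Set.EqOn.eventuallyEq_of_mem hc (hI.mem_nhds hs))
  have := ((hγ s hs).ldot (hγ s hs)).unique hconst
  rw [ldot_comm (γ s)] at this
  linarith

theorem ldot_deriv_eq_of_ldot_eq_cosh_add_sinh (hI : IsOpen I)
    (hγ : ∀ t ∈ I, HasDerivAt γ (g t) t) {a : Fin 4 → ℝ} {a₁ a₂ : ℝ}
    (ha : ∀ t ∈ I, ldot (γ t) a = a₁ * Real.cosh t + a₂ * Real.sinh t) (hs : s ∈ I) :
    ldot (g s) a = a₁ * Real.sinh s + a₂ * Real.cosh s := by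
  have hcs : HasDerivAt (fun t => ldot (γ t) a) (a₁ * Real.sinh s + a₂ * Real.cosh s) s :=
    (((Real.hasDerivAt_cosh s).const_mul a₁).add
      ((Real.hasDerivAt_sinh s).const_mul a₂)).congr_of_eventuallyEq
        (Set.EqOn.eventuallyEq_of_mem ha (hI.mem_nhds hs))
  have := ((hγ s hs).ldot (hasDerivAt_const s a)).unique hcs
  rwa [show ldot (γ s) 0 = 0 by simp [ldot], add_zero] at this

end Curves

theorem stmt13_general (I : Set ℝ) (hI : IsOpen I)
    (a : Fin 4 → ℝ) (q a₁ a₂ : ℝ)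
    (γ g g' X : ℝ → (Fin 4 → ℝ))
    (hd1 : ∀ s ∈ I, HasDerivAt γ (g s) s)
    (hhyp : ∀ s ∈ I, ldot (γ s) (γ s) = -1 ∧ 0 < γ s 3)
    (hunit : ∀ s ∈ I, ldot (g s) (g s) = 1)
    (hXt : ∀ s ∈ I, ldot (X s) (γ s) = 0)
    (hX : ∀ s ∈ I, ∀ w, ldot w (γ s) = 0 →
      ldot (X s) w = det4 (a + ldot a (γ s) • γ s) (g s) w (γ s))
    (heq : ∀ s ∈ I, g' s - γ s = q • X s)
    (hf : ∀ s ∈ I, ldot (γ s) a = a₁ * Real.cosh s + a₂ * Real.sinh s) :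
    ∀ s ∈ I, Real.sqrt (ldot (g' s - γ s) (g' s - γ s))
      = |q| * Real.sqrt |ldot a a + a₁ ^ 2 - a₂ ^ 2| := by
  intro s hs
  have hγγ : ldot (γ s) (γ s) = -1 := (hhyp s hs).1
  have hXX : ldot (X s) (X s) = ldot a a + a₁ ^ 2 - a₂ ^ 2 := by
    rw [ldot_self_of_conformal hγγ (hunit s hs)
        (ldot_deriv_self_eq_zero hI hd1 (fun t ht => (hhyp t ht).1) hs) (hXt s hs) (hX s hs),
      ldot_comm a (γ s), hf s hs, ldot_comm a (g s),
      ldot_deriv_eq_of_ldot_eq_cosh_add_sinh hI hd1 hf hs]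
    linear_combination (a₁ ^ 2 - a₂ ^ 2) * Real.cosh_sq_sub_sinh_sq s
  have hXX_nonneg : 0 ≤ ldot (X s) (X s) :=
    ldot_self_nonneg_of_ldot_eq_zero (by rw [hγγ]; norm_num) (hXt s hs)
  rw [heq s hs, ldot_smul_left, ldot_smul_right, ← mul_assoc, ← sq, ← hXX,
    abs_of_nonneg hXX_nonneg, Real.sqrt_mul (sq_nonneg q), Real.sqrt_sq_eq_abs]

/-- A non-geodesic unit-speed conformal trajectory on `H³` of
`V(p) = a + ⟨a,p⟩p` with `⟨γ, a⟩ = a₁ cosh s + a₂ sinh s` has constant curvature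
`κ = |q| √|⟨a,a⟩ + a₁² - a₂²|`. -/
theorem stmt13 (I : Set ℝ) (hI : IsOpen I) (hconv : Convex ℝ I)
    (a : Fin 4 → ℝ) (q a₁ a₂ : ℝ) (hq : q ≠ 0)
    (γ g g' X : ℝ → (Fin 4 → ℝ))
    (hd1 : ∀ s ∈ I, HasDerivAt γ (g s) s)
    (hd2 : ∀ s ∈ I, HasDerivAt g (g' s) s)
    (hhyp : ∀ s ∈ I, ldot (γ s) (γ s) = -1 ∧ 0 < γ s 3)
    (hunit : ∀ s ∈ I, ldot (g s) (g s) = 1)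
    (hXt : ∀ s ∈ I, ldot (X s) (γ s) = 0)
    (hX : ∀ s ∈ I, ∀ w, ldot w (γ s) = 0 →
      ldot (X s) w = det4 (a + ldot a (γ s) • γ s) (g s) w (γ s))
    (heq : ∀ s ∈ I, g' s - γ s = q • X s)
    (hgeo : ∃ s ∈ I, g' s - γ s ≠ 0)
    (hf : ∀ s ∈ I, ldot (γ s) a = a₁ * Real.cosh s + a₂ * Real.sinh s) :
    ∀ s ∈ I, Real.sqrt (ldot (g' s - γ s) (g' s - γ s))
      = |q| * Real.sqrt |ldot a a + a₁ ^ 2 - a₂ ^ 2| :=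
  stmt13_general I hI a q a₁ a₂ γ g g' X hd1 hhyp hunit hXt hX heq hf
end
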